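/- arXiv:1808.09903 — 3 statements merged into one kernel-verified Lean document; each statement's English description precedes it below -/
import Mathlib

section
/- Let (X,d) be a finite metric space with |X| > 1 and let S, T : X → X satisfy d(S(x),S(y)) < d(T(x),T(y)) for all x ≠ y. Then T is a bijection and S is neither injective nor surjective. -/
/-!
If `S` were surjective, a pair of distinct points at maximal distance would be the `S`-image of
two distinct points whose `T`-images are even farther apart. On a finite set injectivity and
surjectivity coincide, which gives the rest.
-/

open Function

theorem injective_of_dist_lt_dist {α β γ : Type*} [PseudoMetricSpace β] [PseudoMetricSpace γ]
    {S : α → β} {T : α → γ} (h : ∀ x y, x ≠ y → dist (S x) (S y) < dist (T x) (T y)) :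
    Injective T := by
  intro x y hxy
  by_contra hne
  have := h x y hne
  rw [hxy, dist_self] at this
  exact this.not_ge dist_nonneg

theorem exists_ne_forall_ne_dist_le_dist (X : Type*) [PseudoMetricSpace X] [Finite X]
    [Nontrivial X] : ∃ a b : X, a ≠ b ∧ ∀ x y : X, x ≠ y → dist x y ≤ dist a b := by
  have : Nonempty {p : X × X // p.1 ≠ p.2} :=
    let ⟨u, v, huv⟩ := exists_pair_ne X
    ⟨⟨(u, v), huv⟩⟩
  obtain ⟨⟨⟨a, b⟩, hab⟩, hmax⟩ := Finite.exists_max fun p : {p : X × X // p.1 ≠ p.2} ↦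
    dist p.1.1 p.1.2
  exact ⟨a, b, hab, fun x y hxy ↦ hmax ⟨(x, y), hxy⟩⟩

theorem not_surjective_of_dist_lt_dist {X : Type*} [PseudoMetricSpace X] [Finite X]
    [Nontrivial X] {S T : X → X} (h : ∀ x y, x ≠ y → dist (S x) (S y) < dist (T x) (T y)) :
    ¬Surjective S := by
  intro hS
  obtain ⟨a, b, hab, hmax⟩ := exists_ne_forall_ne_dist_le_dist X
  obtain ⟨x, rfl⟩ := hS a
  obtain ⟨y, rfl⟩ := hS b
  have hxy : x ≠ y := fun e ↦ hab (congrArg S e)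
  have hTxy : T x ≠ T y := (injective_of_dist_lt_dist h).ne hxy
  exact (h x y hxy).not_ge (hmax _ _ hTxy)

theorem dominating_map_finite {X : Type*} [MetricSpace X] [Fintype X] [Nontrivial X]
    (S T : X → X)
    (h : ∀ x y : X, x ≠ y → dist (S x) (S y) < dist (T x) (T y)) :
    Function.Bijective T ∧ ¬Function.Injective S ∧ ¬Function.Surjective S := by
  have hT : Injective T := injective_of_dist_lt_dist h
  have hS : ¬Surjective S := not_surjective_of_dist_lt_dist h
  exact ⟨⟨hT, Finite.surjective_of_injective hT⟩,
    fun hS' ↦ hS (Finite.surjective_of_injective hS'), hS⟩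
end

section
/- Let S, T : ℤ → ℤ with d(x,y) = |x-y|, and suppose d(S(x),S(y)) < d(T(x),T(y)) for all x ≠ y. If T satisfies |T(x)-T(x')| ≤ 1 whenever |x-x'| = 1 (i.e., T is digitally continuous for c₁-adjacency), then S is a constant function. -/
theorem Int.eq_of_abs_sub_lt_of_le_one {a b c : ℤ} (h : |a - b| < c) (hc : c ≤ 1) : a = b :=
  sub_eq_zero.1 (Int.abs_lt_one_iff.1 (h.trans_le hc))

theorem Function.Periodic.eq_of_int {α : Type*} {f : ℤ → α} (hf : Function.Periodic f 1)
    (n : ℤ) : f n = f 0 := by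
  simpa using hf.int_mul_eq n

theorem dominated_by_digitally_continuous_is_constant (S T : ℤ → ℤ)
    (h : ∀ x y : ℤ, x ≠ y → |S x - S y| < |T x - T y|)
    (hT : ∀ x x' : ℤ, |x - x'| = 1 → |T x - T x'| ≤ 1) :
    ∃ c : ℤ, ∀ x : ℤ, S x = c := by
  have hS : Function.Periodic S 1 := fun x =>
    Int.eq_of_abs_sub_lt_of_le_one (h (x + 1) x (by omega)) (hT (x + 1) x (by simp))
  exact ⟨S 0, hS.eq_of_int⟩
end

section
/- Let (X,d) be a finite metric space and T : X → X. If there exists an increasing φ : [0,∞) → [0,∞) with φ(0) = 0 and φ(t) < t for t > 0 such that φ(d(T(x),T(y))) < φ(d(x,y)) for all x ≠ y, then there exists α ∈ (0,1) such that d(T(x),T(y)) ≤ α·d(x,y) for all x,y ∈ X. -/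
open Filter Topology

/-- Approaching `1` from below eventually dominates finitely many values below `1`. -/
theorem exists_pos_lt_one_forall_le_of_lt_one {ι : Type*} [Finite ι] {f : ι → ℝ}
    (hf : ∀ i, f i < 1) : ∃ α : ℝ, 0 < α ∧ α < 1 ∧ ∀ i, f i ≤ α := by
  have hpos : ∀ᶠ α in 𝓝[<] (1 : ℝ), 0 < α :=
    (eventually_gt_nhds one_pos).filter_mono nhdsWithin_le_nhds
  have hlt : ∀ᶠ α in 𝓝[<] (1 : ℝ), α < 1 := self_mem_nhdsWithin
  have hle : ∀ᶠ α in 𝓝[<] (1 : ℝ), ∀ i, f i ≤ α :=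
    eventually_all.2 fun i =>
      ((eventually_gt_nhds (hf i)).filter_mono nhdsWithin_le_nhds).mono fun _ => le_of_lt
  exact (hpos.and (hlt.and hle)).exists

theorem exists_contraction_of_dist_lt {X Y : Type*} [MetricSpace X] [PseudoMetricSpace Y]
    [Finite X] {f : X → Y} (hf : ∀ x y, x ≠ y → dist (f x) (f y) < dist x y) :
    ∃ α : ℝ, 0 < α ∧ α < 1 ∧ ∀ x y, dist (f x) (f y) ≤ α * dist x y := by
  -- on the diagonal the ratio is the junk value `0 / 0 = 0`
  have hratio : ∀ p : X × X, dist (f p.1) (f p.2) / dist p.1 p.2 < 1 := by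
    rintro ⟨x, y⟩
    rcases eq_or_ne x y with rfl | hxy
    · simp
    · exact (div_lt_one (dist_pos.2 hxy)).2 (hf x y hxy)
  obtain ⟨α, hα0, hα1, hαle⟩ := exists_pos_lt_one_forall_le_of_lt_one hratio
  refine ⟨α, hα0, hα1, fun x y => ?_⟩
  rcases eq_or_ne x y with rfl | hxy
  · simp
  · exact (div_le_iff₀ (dist_pos.2 hxy)).1 (hαle (x, y))

theorem phi_contractive_is_contraction_general {X : Type*} [MetricSpace X] [Fintype X]
    (T : X → X) (φ : ℝ → ℝ)
    (hφmono : StrictMonoOn φ (Set.Ici 0))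
    (hcontr : ∀ x y : X, x ≠ y → φ (dist (T x) (T y)) < φ (dist x y)) :
    ∃ α : ℝ, 0 < α ∧ α < 1 ∧ ∀ x y : X, dist (T x) (T y) ≤ α * dist x y :=
  exists_contraction_of_dist_lt fun x y hxy =>
    hφmono.monotoneOn.reflect_lt dist_nonneg dist_nonneg (hcontr x y hxy)

theorem phi_contractive_is_contraction {X : Type*} [MetricSpace X] [Fintype X]
    (T : X → X) (φ : ℝ → ℝ)
    (hφmono : StrictMonoOn φ (Set.Ici 0))
    (hφ0 : φ 0 = 0) (hφlt : ∀ t : ℝ, 0 < t → φ t < t)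
    (hcontr : ∀ x y : X, x ≠ y → φ (dist (T x) (T y)) < φ (dist x y)) :
    ∃ α : ℝ, 0 < α ∧ α < 1 ∧ ∀ x y : X, dist (T x) (T y) ≤ α * dist x y :=
  phi_contractive_is_contraction_general T φ hφmono hcontr
end
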